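/- Let G be a subgroup of Aut(Γ), (f_i)_{i∈I} an LK-family, and ψ : B⁺ → End(V) the associated LK-representation. Assume f_i(e_α) = f_{g(i)}(e_{g(α)}) for every (i, α, g) ∈ I × Φ⁺ × G. Then for every (b, v, g) ∈ B⁺ × V × G, g(ψ_b(v)) = ψ_{g(b)}(g(v)); in particular, for every b ∈ (B⁺)^G, ψ_b stabilizes V^G, so ψ induces a monoid homomorphism ψ^G : (B⁺)^G → End(V^G), b ↦ ψ_b|_{V^G}. Moreover, if ψ_b is an automorphism of V for every b ∈ B⁺, then ψ^G_b is an automorphism of V^G for every b ∈ (B⁺)^G. -/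

import Mathlib

set_option maxRecDepth 4000

namespace LK

/-! ### Coxeter matrices -/

/-- A Coxeter matrix on an index set `I` (entry `0` encodes `∞`). -/
structure CoxM (I : Type) where
  m : I → I → ℕ
  symm : ∀ i j, m i j = m j i
  one_iff : ∀ i j, m i j = 1 ↔ i = j

variable {I : Type}

/-- A Coxeter matrix is of small type if all its entries belong to `{1,2,3}`. -/
def CoxM.Small (M : CoxM I) : Prop := ∀ i j, M.m i j = 1 ∨ M.m i j = 2 ∨ M.m i j = 3

/-- The alternating word `i j i j ⋯` with `k` letters. -/
def braidList (k : ℕ) (i j : I) : List I :=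
  (List.range k).map (fun n => if n % 2 = 0 then i else j)

/-- The braid word `s_i s_j s_i ⋯` (`k` letters) in the free monoid. -/
def braidWord (k : ℕ) (i j : I) : FreeMonoid I := FreeMonoid.ofList (braidList k i j)

/-- The braid relations defining the Artin–Tits monoid. -/
def artinRel (M : CoxM I) : FreeMonoid I → FreeMonoid I → Prop :=
  fun x y => ∃ i j, M.m i j ≠ 0 ∧ x = braidWord (M.m i j) i j ∧ y = braidWord (M.m i j) j i

/-- The congruence on the free monoid generated by the braid relations. -/
def artinCon (M : CoxM I) : Con (FreeMonoid I) := conGen (artinRel M)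

/-- The Artin–Tits monoid `B⁺` of a Coxeter matrix. -/
def AM (M : CoxM I) := (artinCon M).Quotient

instance (M : CoxM I) : Monoid (AM M) := inferInstanceAs (Monoid (artinCon M).Quotient)

/-- The standard generators of the Artin–Tits monoid. -/
def gen (M : CoxM I) (i : I) : AM M := (artinCon M).mk' (FreeMonoid.of i)

/-- `I(b) = {i ∈ I ∣ s_i ≼ b}`, where `≼` is left divisibility. -/
def IdxSet (M : CoxM I) (x : AM M) : Set I := {i | gen M i ∣ x}

/-- The braid word `s_i s_j s_i ⋯` (`k` letters) in the free group. -/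
def braidWordG (k : ℕ) (i j : I) : FreeGroup I := ((braidList k i j).map FreeGroup.of).prod

/-- The braid relators defining the Artin–Tits group. -/
def artinGRels (M : CoxM I) : Set (FreeGroup I) :=
  {r | ∃ i j, M.m i j ≠ 0 ∧ r = braidWordG (M.m i j) i j * (braidWordG (M.m i j) j i)⁻¹}

/-- The Artin–Tits group `B` of a Coxeter matrix. -/
def AG (M : CoxM I) := PresentedGroup (artinGRels M)

instance (M : CoxM I) : Group (AG M) := inferInstanceAs (Group (PresentedGroup _))

/-- The standard generators of the Artin–Tits group. -/
def ggen (M : CoxM I) (i : I) : AG M := PresentedGroup.of i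

/-- The relators defining the Coxeter group. -/
def coxRels (M : CoxM I) : Set (FreeGroup I) :=
  {r | ∃ i j, M.m i j ≠ 0 ∧ r = (FreeGroup.of i * FreeGroup.of j) ^ (M.m i j)}

/-- The Coxeter group `W` of a Coxeter matrix. -/
def CoxG (M : CoxM I) := PresentedGroup (coxRels M)

instance (M : CoxM I) : Group (CoxG M) := inferInstanceAs (Group (PresentedGroup _))

/-- A Coxeter matrix is spherical if its Coxeter group is finite. -/
def Spherical (M : CoxM I) : Prop := Finite (CoxG M)

/-- Connectedness of the Coxeter graph: there is an edge between `i` and `j`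
iff `m i j ∉ {1,2}`. -/
def Connected (M : CoxM I) : Prop :=
  ∀ i j : I, Relation.ReflTransGen (fun a b => M.m a b ≠ 1 ∧ M.m a b ≠ 2) i j

/-- Restriction of a Coxeter matrix to a subset of the index set. -/
def CoxM.restrictF [DecidableEq I] (M : CoxM I) (J : Finset I) : CoxM {i // i ∈ J} :=
  ⟨fun i j => M.m i j, fun i j => M.symm i j,
   fun i j => (M.one_iff i j).trans (by exact Subtype.coe_inj)⟩

/-- An irreducible affine Coxeter matrix: connected, non-spherical, but every proper
parabolic submatrix is spherical. -/
def Affine [Fintype I] [DecidableEq I] (M : CoxM I) : Prop :=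
  Connected M ∧ ¬ Spherical M ∧ ∀ J : Finset I, J ≠ Finset.univ → Spherical (M.restrictF J)

/-! ### The standard root system -/

section Roots

variable [Fintype I] [DecidableEq I]

/-- The coefficients `-2 cos (π / m i j)` of the standard bilinear form. -/
noncomputable def cf (M : CoxM I) (i j : I) : ℝ := -2 * Real.cos (Real.pi / (M.m i j : ℝ))

/-- The standard symmetric bilinear form `( · | · )` on `E = ⊕ ℝ α_i`. -/
noncomputable def bform (M : CoxM I) (x y : I → ℝ) : ℝ := ∑ i, ∑ j, x i * y j * cf M i j

/-- The simple root `α_i`. -/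
def sroot (i : I) : I → ℝ := Pi.single i 1

/-- The simple reflection `s_i` acting on `E`. -/
noncomputable def srefl (M : CoxM I) (i : I) (v : I → ℝ) : I → ℝ :=
  v - bform M v (sroot i) • sroot i

/-- The roots: the orbit of the simple roots under the reflections. -/
inductive IsRoot (M : CoxM I) : (I → ℝ) → Prop
  | simple (i : I) : IsRoot M (sroot i)
  | srefl (i : I) (v : I → ℝ) : IsRoot M v → IsRoot M (LK.srefl M i v)

/-- The positive roots: roots with nonnegative coordinates. -/
def IsPos (M : CoxM I) (v : I → ℝ) : Prop := IsRoot M v ∧ ∀ i, 0 ≤ v i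

/-- The set `Φ⁺` of positive roots, as a type. -/
def Pos (M : CoxM I) := {v : I → ℝ // IsPos M v}

/-- The depth of a positive root: the least number of simple reflections needed to
send it to a negative vector. -/
noncomputable def dep (M : CoxM I) (v : I → ℝ) : ℕ :=
  sInf {n | ∃ l : List I, l.length = n ∧ ∃ k, l.foldr (srefl M) v k < 0}

theorem isPos_sroot (M : CoxM I) (i : I) : IsPos M (sroot i) :=
  ⟨IsRoot.simple i, fun j => by rw [sroot, Pi.single_apply]; split <;> norm_num⟩

/-- The simple root `α_i` as a positive root. -/
def simplePos (M : CoxM I) (i : I) : Pos M := ⟨sroot i, isPos_sroot M i⟩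

/-! ### The Lawrence–Krammer representation -/

variable (M : CoxM I) (R : Type) [CommRing R]

/-- The free module `V` with basis `(e_α)` indexed by the positive roots. -/
abbrev VV := Pos M →₀ R

/-- The basis vector `e_α` of `V`. -/
noncomputable def ev (α : Pos M) : VV M R := Finsupp.single α 1

open scoped Classical in
/-- The value of the map `φ_i` on the basis vector indexed by `α`. -/
noncomputable def phiAux (a b c d : R) (i : I) (α : Pos M) : VV M R :=
  if α.1 = sroot i then 0
  else if srefl M i α.1 = α.1 then d • ev M R α
  else if h : IsPos M (srefl M i α.1) then
    if dep M α.1 < dep M (srefl M i α.1) then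
      a • ev M R α + c • ev M R ⟨srefl M i α.1, h⟩
    else b • ev M R ⟨srefl M i α.1, h⟩
  else 0

/-- The linear map `φ_i : V → V`. -/
noncomputable def phi (a b c d : R) (i : I) : VV M R →ₗ[R] VV M R :=
  Finsupp.lift (VV M R) R (Pos M) (phiAux M R a b c d i)

/-- The linear map `ψ_i = φ_i + f_i ⊠ e_{α_i}`. -/
noncomputable def psim (a b c d : R) (f : I → (VV M R →ₗ[R] R)) (i : I) :
    VV M R →ₗ[R] VV M R :=
  phi M R a b c d i + (f i).smulRight (ev M R (simplePos M i))

/-- LK-families. -/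
structure IsLK (a b c d : R) (f : I → (VV M R →ₗ[R] R)) : Prop where
  diag : ∀ i j, i ≠ j → f i (ev M R (simplePos M j)) = 0
  rel2 : ∀ i j, M.m i j = 2 → (f i).comp (phi M R a b c d j) = d • f i
  rel3 : ∀ i j, M.m i j = 3 →
    (f i).comp (phi M R a b c d j) = (f j).comp (phi M R a b c d i)

/-- The `R`-module `𝓕` of LK-families. -/
noncomputable def LKFamilies (a b c d : R) : Submodule R (I → (VV M R →ₗ[R] R)) where
  carrier := {f | IsLK M R a b c d f}
  add_mem' := by
    rintro f g ⟨hf1, hf2, hf3⟩ ⟨hg1, hg2, hg3⟩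
    refine ⟨fun i j hij => ?_, fun i j hij => ?_, fun i j hij => ?_⟩
    · rw [Pi.add_apply, LinearMap.add_apply, hf1 i j hij, hg1 i j hij, add_zero]
    · simp only [Pi.add_apply, LinearMap.add_comp, hf2 i j hij, hg2 i j hij, smul_add]
    · simp only [Pi.add_apply, LinearMap.add_comp, hf3 i j hij, hg3 i j hij]
  zero_mem' := by
    refine ⟨fun i j hij => ?_, fun i j hij => ?_, fun i j hij => ?_⟩
    · rw [Pi.zero_apply, LinearMap.zero_apply]
    · simp only [Pi.zero_apply, LinearMap.zero_comp, smul_zero]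
    · simp only [Pi.zero_apply, LinearMap.zero_comp]
  smul_mem' := by
    rintro r f ⟨h1, h2, h3⟩
    refine ⟨fun i j hij => ?_, fun i j hij => ?_, fun i j hij => ?_⟩
    · rw [Pi.smul_apply, LinearMap.smul_apply, h1 i j hij, smul_zero]
    · rw [Pi.smul_apply, LinearMap.smul_comp, h2 i j hij]; exact smul_comm r d (f i)
    · simp only [Pi.smul_apply, LinearMap.smul_comp, h3 i j hij]

end Roots

/-! ### The monoid of binary relations -/

/-- The monoid of binary relations on a set `Ω`, where `β (R * S) α ↔ ∃ γ, β R γ ∧ γ S α`. -/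
def Bin (Ω : Type) := Ω → Ω → Prop

instance (Ω : Type) : Monoid (Bin Ω) where
  mul T S := fun x z => ∃ y, T x y ∧ S y z
  one := fun x y => x = y
  mul_assoc T S U := by
    funext x z
    apply propext
    constructor
    · rintro ⟨y, ⟨u, hTu, hSu⟩, hU⟩; exact ⟨u, hTu, y, hSu, hU⟩
    · rintro ⟨u, hT, y, hS, hU⟩; exact ⟨y, ⟨u, hT, hS⟩, hU⟩
  one_mul T := by
    funext x z
    apply propext
    constructor
    · rintro ⟨y, rfl, h⟩; exact h
    · intro h; exact ⟨x, rfl, h⟩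
  mul_one T := by
    funext x z
    apply propext
    constructor
    · rintro ⟨y, h, rfl⟩; exact h
    · intro h; exact ⟨z, h, rfl⟩

/-- `R(Ψ) = {β ∈ Ω ∣ ∃ α ∈ Ψ, β R α}`. -/
def Bin.image {Ω : Type} (T : Bin Ω) (Ψ : Set Ω) : Set Ω := {x | ∃ y ∈ Ψ, T x y}

/-! ### Further constructions -/

section More

variable [Fintype I] [DecidableEq I]

/-- The map `μ : 𝓕 → 𝔯` in the spherical case. -/
noncomputable def muSph (M : CoxM I) (R : Type) [CommRing R] (a b c d : R) (i0 : I) :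
    LKFamilies M R a b c d →ₗ[R] R where
  toFun f := f.1 i0 (ev M R (simplePos M i0))
  map_add' f g := rfl
  map_smul' r f := rfl

/-- A graph automorphism of a Coxeter matrix. -/
def IsAut (M : CoxM I) (g : Equiv.Perm I) : Prop := ∀ i j, M.m (g i) (g j) = M.m i j

/-- The action of a permutation of `I` on `E = ⊕ ℝ α_i`, sending `α_i` to `α_{g(i)}`. -/
def permE (g : Equiv.Perm I) (v : I → ℝ) : I → ℝ := fun i => v (g.symm i)

open scoped Classical in
/-- The element of `Φ⁺` with given coordinates (junk value if the vector is not
a positive root). -/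
noncomputable def posOf (M : CoxM I) [Nonempty I] (v : I → ℝ) : Pos M :=
  if h : IsPos M v then ⟨v, h⟩ else simplePos M (Classical.arbitrary I)

/-- The action of a permutation of `I` on `Φ⁺`. -/
noncomputable def permPos (M : CoxM I) [Nonempty I] (g : Equiv.Perm I) (α : Pos M) : Pos M :=
  posOf M (permE g α.1)

/-- The action of a permutation of `I` on `V`, permuting the basis `(e_α)`. -/
noncomputable def permV (M : CoxM I) (R : Type) [CommRing R] [Nonempty I] (g : Equiv.Perm I) :
    VV M R →ₗ[R] VV M R :=
  Finsupp.lmapDomain R R (permPos M g)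

/-- The submodule `V^G` of fixed points of `V` under a group `G` of permutations of `I`. -/
noncomputable def fixedV (M : CoxM I) (R : Type) [CommRing R] [Nonempty I]
    (G : Subgroup (Equiv.Perm I)) : Submodule R (VV M R) where
  carrier := {v | ∀ g ∈ G, permV M R g v = v}
  add_mem' hx hy g hg := by rw [map_add, hx g hg, hy g hg]
  zero_mem' g hg := map_zero _
  smul_mem' r v hv g hg := by rw [map_smul, hv g hg]

/-- The submonoid `(B⁺)^G` of fixed points of the Artin–Tits monoid under a group `G`
of permutations of `I` (acting via `actB`). -/
def fixedB (M : CoxM I) (actB : Equiv.Perm I → (AM M →* AM M))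
    (G : Subgroup (Equiv.Perm I)) : Submonoid (AM M) where
  carrier := {x | ∀ g ∈ G, actB g x = x}
  one_mem' g hg := map_one _
  mul_mem' hx hy g hg := by rw [map_mul, hx g hg, hy g hg]

/-- The map `μ : 𝓕 → 𝔯^ℕ` in the affine case, defined from the data of the imaginary
root `δ` and of a pair `(i0, j0)` with `m i0 j0 = 3`. -/
noncomputable def muAff (M : CoxM I) (R : Type) [CommRing R] [Nonempty I] (b c d : R)
    (δ : I → ℝ) (i0 j0 : I) (f : I → (VV M R →ₗ[R] R)) : ℕ → R := fun n =>
  if n % 2 = 0 then f i0 (ev M R (posOf M ((n / 2 : ℕ) • δ + sroot i0)))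
  else
    c * d * f i0 (ev M R (posOf M (((n + 1) / 2 : ℕ) • δ - sroot i0)))
      - b * c * f i0 (ev M R (posOf M (((n + 1) / 2 : ℕ) • δ - sroot i0 - sroot j0)))
      - d * d * f j0 (ev M R (posOf M (((n + 1) / 2 : ℕ) • δ - sroot i0 - sroot j0)))

end More

end LK

/-!
A graph automorphism `g` of `Γ` preserves the bilinear form, hence commutes with the simple
reflections (`g s_i g⁻¹ = s_{g(i)}`), and so preserves roots, positivity and depth. Every case
distinction in the definition of `φ_i` is therefore transported to the one defining
`φ_{g(i)}`, giving `g φ_i = φ_{g(i)} g` on `V`; with the `G`-symmetry of the family this gives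
`g ψ_i = ψ_{g(i)} g`, and by induction on words `g ψ_b = ψ_{g(b)} g`. For `b ∈ (B⁺)^G` the map
`ψ_b` (and its inverse, if any) commutes with `G`, so it restricts to `V^G`.
-/

namespace LK

variable {I : Type}

theorem AM.induction_gen_mul {M : CoxM I} {P : AM M → Prop} (x : AM M) (one : P 1)
    (gen_mul : ∀ i x, P x → P (gen M i * x)) : P x := by
  obtain ⟨w, rfl⟩ := Con.mk'_surjective (c := artinCon M) x
  induction w using FreeMonoid.recOn with
  | one => exact one
  | of_mul i w ih => rw [map_mul]; exact gen_mul i _ ih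

section Endomorphisms

variable {R V : Type*} [CommRing R] [AddCommGroup V] [Module R V]

def restrictEndHom {N : Type*} [Monoid N] (ρ : N →* Module.End R V) (S : Submonoid N)
    (W : Submodule R V) (h : ∀ x ∈ S, Set.MapsTo (ρ x) W W) : S →* Module.End R W where
  toFun x := (ρ x).restrict (h x x.2)
  map_one' := by ext; simp
  map_mul' x y := by
    ext v
    exact LinearMap.congr_fun (map_mul ρ x.1 y.1) v.1

theorem isUnit_restrict {T : Module.End R V} (hT : IsUnit T) {W : Submodule R V}
    (hW : Set.MapsTo T W W) (hW' : Set.MapsTo (↑hT.unit⁻¹ : Module.End R V) W W) :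
    IsUnit (T.restrict hW) := by
  refine isUnit_iff_exists.2 ⟨(↑hT.unit⁻¹ : Module.End R V).restrict hW', ?_, ?_⟩ <;> ext v
  · exact congrArg (fun S : Module.End R V => S v) hT.unit.mul_inv
  · exact congrArg (fun S : Module.End R V => S v) hT.unit.inv_mul

end Endomorphisms

section Automorphisms

variable {M : CoxM I} {g : Equiv.Perm I}

theorem permE_inv_permE (g : Equiv.Perm I) (v : I → ℝ) : permE g⁻¹ (permE g v) = v := by
  funext i
  simp [permE, Equiv.Perm.inv_def]

theorem permE_injective (g : Equiv.Perm I) : Function.Injective (permE (I := I) g) :=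
  Function.LeftInverse.injective (permE_inv_permE g)

theorem IsAut.inv (hg : IsAut M g) : IsAut M g⁻¹ := fun i j => by
  simpa using (hg (g⁻¹ i) (g⁻¹ j)).symm

theorem bform_permE [Fintype I] (hg : IsAut M g) (x y : I → ℝ) :
    bform M (permE g x) (permE g y) = bform M x y := by
  refine (Fintype.sum_equiv g _ _ fun i => Fintype.sum_equiv g _ _ fun j => ?_).symm
  simp [permE, cf, hg i j]

variable [DecidableEq I]

theorem permE_sroot (g : Equiv.Perm I) (i : I) : permE g (sroot i) = sroot (g i) := by
  funext k
  simp only [permE, sroot, Pi.single_apply, Equiv.symm_apply_eq]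

variable [Fintype I]

theorem srefl_permE (hg : IsAut M g) (i : I) (v : I → ℝ) :
    srefl M (g i) (permE g v) = permE g (srefl M i v) := by
  rw [srefl, srefl, ← permE_sroot, bform_permE hg]
  rfl

theorem isRoot_permE (hg : IsAut M g) {v : I → ℝ} (h : IsRoot M v) : IsRoot M (permE g v) := by
  induction h with
  | simple i => rw [permE_sroot]; exact .simple _
  | srefl i v _ ih => rw [← srefl_permE hg]; exact .srefl _ _ ih

theorem isPos_permE (hg : IsAut M g) {v : I → ℝ} (h : IsPos M v) : IsPos M (permE g v) :=
  ⟨isRoot_permE hg h.1, fun i => h.2 (g.symm i)⟩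

theorem isPos_permE_iff (hg : IsAut M g) (v : I → ℝ) : IsPos M (permE g v) ↔ IsPos M v :=
  ⟨fun h => permE_inv_permE g v ▸ isPos_permE hg.inv h, isPos_permE hg⟩

theorem foldr_srefl_map_permE (hg : IsAut M g) (l : List I) (v : I → ℝ) :
    (l.map g).foldr (srefl M) (permE g v) = permE g (l.foldr (srefl M) v) := by
  induction l with
  | nil => rfl
  | cons a l ih => simp only [List.map_cons, List.foldr_cons, ih, srefl_permE hg]

theorem dep_permE (hg : IsAut M g) (v : I → ℝ) : dep M (permE g v) = dep M v := by
  have key : ∀ {g : Equiv.Perm I}, IsAut M g → ∀ v n,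
      (∃ l : List I, l.length = n ∧ ∃ k, l.foldr (srefl M) v k < 0) →
      ∃ l : List I, l.length = n ∧ ∃ k, l.foldr (srefl M) (permE g v) k < 0 := by
    rintro g hg v n ⟨l, rfl, k, hk⟩
    exact ⟨l.map g, List.length_map _, g k, by simpa [foldr_srefl_map_permE hg, permE] using hk⟩
  unfold dep
  congr 1
  ext n
  simp only [Set.mem_ofPred_eq]
  exact ⟨fun h => by simpa only [permE_inv_permE] using key hg.inv _ n h, key hg v n⟩

variable {R : Type} [CommRing R]

theorem phi_ev (a b c d : R) (i : I) (α : Pos M) :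
    phi M R a b c d i (ev M R α) = phiAux M R a b c d i α := by
  rw [phi, ev, Finsupp.lift_apply, Finsupp.sum_single_index (by rw [zero_smul]), one_smul]

variable [Nonempty I]

theorem permPos_eq (hg : IsAut M g) (α : Pos M) :
    permPos M g α = ⟨permE g α.1, isPos_permE hg α.2⟩ :=
  dif_pos _

theorem permPos_simplePos (hg : IsAut M g) (i : I) :
    permPos M g (simplePos M i) = simplePos M (g i) := by
  rw [permPos_eq hg]
  exact Subtype.ext (permE_sroot g i)

theorem permV_ev (g : Equiv.Perm I) (α : Pos M) :
    permV M R g (ev M R α) = ev M R (permPos M g α) :=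
  Finsupp.mapDomain_single

-- `simp` cannot use `permV_ev` on `ev M R ⟨v, h⟩`, whose argument is typed `{v // IsPos M v}`.
theorem permV_ev_mk (hg : IsAut M g) {v : I → ℝ} (h : IsPos M v) :
    permV M R g (ev M R ⟨v, h⟩) = ev M R ⟨permE g v, isPos_permE hg h⟩ :=
  (permV_ev g _).trans (congrArg _ (permPos_eq hg _))

theorem phiAux_permPos (hg : IsAut M g) (a b c d : R) (i : I) (α : Pos M) :
    phiAux M R a b c d (g i) (permPos M g α) = permV M R g (phiAux M R a b c d i α) := by
  -- `classical` supplies the `Decidable` instances `simp` needs to rewrite the `dite` conditions.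
  classical
  rw [permPos_eq hg]
  unfold phiAux
  simp only [← permE_sroot, (permE_injective g).eq_iff, srefl_permE hg, isPos_permE_iff hg,
    dep_permE hg]
  split_ifs <;> simp [permV_ev_mk hg, permV_ev, permPos_eq hg]

theorem permV_mul_psim (hg : IsAut M g) {a b c d : R} {f : I → (VV M R →ₗ[R] R)}
    (hsym : ∀ i α, f i (ev M R α) = f (g i) (ev M R (permPos M g α))) (i : I) :
    permV M R g * psim M R a b c d f i = psim M R a b c d f (g i) * permV M R g := by
  refine Finsupp.basisSingleOne.ext fun α => ?_
  change permV M R g (psim M R a b c d f i (ev M R α))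
    = psim M R a b c d f (g i) (permV M R g (ev M R α))
  simp only [psim, LinearMap.add_apply, LinearMap.smulRight_apply, map_add, map_smul, phi_ev,
    permV_ev, ← phiAux_permPos hg, permPos_simplePos hg, hsym i α]

theorem permV_mul_psirep (hg : IsAut M g) {a b c d : R} {f : I → (VV M R →ₗ[R] R)}
    (hsym : ∀ i α, f i (ev M R α) = f (g i) (ev M R (permPos M g α)))
    {ρ : AM M →* Module.End R (VV M R)} (hρ : ∀ i, ρ (gen M i) = psim M R a b c d f i)
    {σ : AM M →* AM M} (hσ : ∀ i, σ (gen M i) = gen M (g i)) (x : AM M) :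
    permV M R g * ρ x = ρ (σ x) * permV M R g := by
  induction x using AM.induction_gen_mul with
  | one => simp
  | gen_mul i x ih =>
    rw [map_mul, map_mul, map_mul, hσ, hρ, hρ, ← mul_assoc, permV_mul_psim hg hsym, mul_assoc,
      ih, mul_assoc]

theorem mapsTo_fixedV {G : Subgroup (Equiv.Perm I)} {T : Module.End R (VV M R)}
    (hT : ∀ g ∈ G, Commute (permV M R g) T) : Set.MapsTo T (fixedV M R G) (fixedV M R G) :=
  fun v hv g hg => by rw [← Module.End.mul_apply, (hT g hg).eq, Module.End.mul_apply, hv g hg]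

end Automorphisms

end LK

open LK in
theorem statement_18_general {I : Type} [Fintype I] [DecidableEq I] [Nonempty I] (M : CoxM I)
    (R : Type) [CommRing R] (b c d : R)
    (a : R)
    (G : Subgroup (Equiv.Perm I)) (hG : ∀ g ∈ G, IsAut M g)
    (f : I → (VV M R →ₗ[R] R))
    (hsym : ∀ g ∈ G, ∀ (i : I) (α : Pos M),
      f i (ev M R α) = f (g i) (ev M R (permPos M g α)))
    (psirep : AM M →* Module.End R (VV M R))
    (hpsi : ∀ i : I, psirep (gen M i) = psim M R a b c d f i)
    (actB : Equiv.Perm I → (AM M →* AM M))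
    (hactB : ∀ g ∈ G, ∀ i : I, actB g (gen M i) = gen M (g i)) :
    (∀ (x : AM M) (v : VV M R), ∀ g ∈ G,
      permV M R g (psirep x v) = psirep (actB g x) (permV M R g v)) ∧
    (∀ x ∈ fixedB M actB G, ∀ v ∈ fixedV M R G, psirep x v ∈ fixedV M R G) ∧
    ∃ psiG : fixedB M actB G →* Module.End R (fixedV M R G),
      (∀ (x : fixedB M actB G) (v : fixedV M R G),
        (psiG x v : VV M R) = psirep x.1 v.1) ∧
      ((∀ x : AM M, IsUnit (psirep x)) → ∀ y : fixedB M actB G, IsUnit (psiG y)) := by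
  have equivariant : ∀ g ∈ G, ∀ x, permV M R g * psirep x = psirep (actB g x) * permV M R g :=
    fun g hg => permV_mul_psirep (hG g hg) (hsym g hg) hpsi (hactB g hg)
  have commute : ∀ x ∈ fixedB M actB G, ∀ g ∈ G, Commute (permV M R g) (psirep x) :=
    fun x hx g hg => (equivariant g hg x).trans (by rw [hx g hg])
  have stable : ∀ x ∈ fixedB M actB G, Set.MapsTo (psirep x) (fixedV M R G) (fixedV M R G) :=
    fun x hx => mapsTo_fixedV (commute x hx)
  refine ⟨fun x v g hg => LinearMap.congr_fun (equivariant g hg x) v,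
    fun x hx v hv => stable x hx hv, restrictEndHom psirep _ _ stable, fun _ _ => rfl,
    fun hunit y => ?_⟩
  exact isUnit_restrict (hunit y) (stable y y.2)
    (mapsTo_fixedV fun g hg => (commute y y.2 g hg).units_inv_right)

open LK in
/-- equivariance of an LK-representation with `G`-symmetric LK-family, the
induced twisted LK-representation, and invertibility of its images. -/
theorem statement_18 {I : Type} [Fintype I] [DecidableEq I] [Nonempty I] (M : CoxM I)
    (hsmall : M.Small)
    (R : Type) [CommRing R] (b c d : R) (hb : IsUnit b) (hc : IsUnit c) (hd : IsUnit d)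
    (a : R) (ha : a = d - b * c * Ring.inverse d)
    (G : Subgroup (Equiv.Perm I)) (hG : ∀ g ∈ G, IsAut M g)
    (f : I → (VV M R →ₗ[R] R)) (hf : IsLK M R a b c d f)
    (hsym : ∀ g ∈ G, ∀ (i : I) (α : Pos M),
      f i (ev M R α) = f (g i) (ev M R (permPos M g α)))
    (psirep : AM M →* Module.End R (VV M R))
    (hpsi : ∀ i : I, psirep (gen M i) = psim M R a b c d f i)
    (actB : Equiv.Perm I → (AM M →* AM M))
    (hactB : ∀ g ∈ G, ∀ i : I, actB g (gen M i) = gen M (g i)) :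
    (∀ (x : AM M) (v : VV M R), ∀ g ∈ G,
      permV M R g (psirep x v) = psirep (actB g x) (permV M R g v)) ∧
    (∀ x ∈ fixedB M actB G, ∀ v ∈ fixedV M R G, psirep x v ∈ fixedV M R G) ∧
    ∃ psiG : fixedB M actB G →* Module.End R (fixedV M R G),
      (∀ (x : fixedB M actB G) (v : fixedV M R G),
        (psiG x v : VV M R) = psirep x.1 v.1) ∧
      ((∀ x : AM M, IsUnit (psirep x)) → ∀ y : fixedB M actB G, IsUnit (psiG y)) :=
  statement_18_general M R b c d a G hG f hsym psirep hpsi actB hactB
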